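/- Let Ŷ ∈ R^{n×k} have full column rank, let ŷ_i be its columns, and suppose the Gram matrix G = Ŷ^T Ŷ has all entries nonnegative (doubly nonnegative). Let v(s) = (⟨ŷ_1,s⟩², …, ⟨ŷ_k,s⟩²) for unit vectors s ∈ span(ŷ_1,…,ŷ_k). Then for every such s there exists a unit vector s' in the dual cone of cone(ŷ_1,…,ŷ_k) with ⟨ŷ_i, s'⟩ ≥ |⟨ŷ_i, s⟩| for all i; consequently every Pareto optimal point of the feasible region { v(s) : ‖s‖=1, s ∈ span(ŷ_i) } (for the maximization of all coordinates) lies on the single surface { v ≥ 0 : (√v)^T G^{-1} (√v) = 1 }. -/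

import Mathlib

/-!
Let `V = span ŷ_i` and let `C ⊆ V` be the inner dual cone of the `ŷ_i` taken inside `V`; the
nonnegativity of `G` says `ŷ_i ∈ C`. With `p = P_C s`, the reflection `s' = 2p - s` lies in `V`,
has `‖s'‖ = ‖s‖` because `s - p ⊥ p`, and satisfies `⟪ŷ_i, s'⟫ ≥ |⟪ŷ_i, s⟫|` because both
`⟪ŷ_i, p - s⟫` and `⟪ŷ_i, p⟫` are nonnegative. A Pareto optimal `v = v(s)` is therefore equal to
`v(s')`, so `√v = (⟪ŷ_i, s'⟫)_i = G c` where `s' = ∑ c_i ŷ_i`, and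
`√vᵀ G⁻¹ √v = cᵀ G c = ‖s'‖² = 1`.
-/

open Matrix

open scoped RealInnerProductSpace

section

variable {E : Type*} [NormedAddCommGroup E] [InnerProductSpace ℝ E]

theorem ProperCone.exists_moreau_decomposition [CompleteSpace E] (C : ProperCone ℝ E) (s : E) :
    ∃ p ∈ C, p - s ∈ innerDual (C : Set E) ∧ ⟪s - p, p⟫ = 0 := by
  obtain ⟨p, hpC, hmin⟩ :=
    exists_norm_eq_iInf_of_complete_convex ⟨0, C.zero_mem⟩ C.isClosed.isComplete C.convex s
  have hvar := (norm_eq_iInf_iff_real_inner_le_zero C.convex hpC).1 hmin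
  have hpolar : ∀ w ∈ C, ⟪s - p, w⟫ ≤ 0 := fun w hw => by
    simpa using hvar (w + p) (C.add_mem hw hpC)
  refine ⟨p, hpC, fun w hw => ?_, ?_⟩
  · change 0 ≤ ⟪w, p - s⟫
    rw [← neg_sub, inner_neg_right, real_inner_comm]
    exact neg_nonneg.2 (hpolar w hw)
  · have := hvar 0 C.zero_mem
    rw [zero_sub, inner_neg_right] at this
    exact le_antisymm (hpolar p hpC) (by linarith)

theorem norm_two_smul_sub_eq_of_inner_sub_eq_zero {s p : E} (h : ⟪s - p, p⟫ = 0) :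
    ‖(2 : ℝ) • p - s‖ = ‖s‖ := by
  have hp : ⟪p, s - p⟫ = 0 := by rw [real_inner_comm, h]
  have h₁ := norm_sub_sq_eq_norm_sq_add_norm_sq_real hp
  have h₂ := norm_add_sq_eq_norm_sq_add_norm_sq_real hp
  rw [show p - (s - p) = (2 : ℝ) • p - s by module] at h₁
  rw [add_sub_cancel] at h₂
  exact mul_self_inj (norm_nonneg _) (norm_nonneg _) |>.1 (h₁.trans h₂.symm)

theorem exists_norm_eq_abs_inner_le [CompleteSpace E] (S : Set E)
    (hS : ∀ x ∈ S, ∀ y ∈ S, 0 ≤ ⟪x, y⟫) (s : E) :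
    ∃ s' : E, ‖s'‖ = ‖s‖ ∧ ∀ x ∈ S, |⟪x, s⟫| ≤ ⟪x, s'⟫ := by
  obtain ⟨p, hpC, hps, hperp⟩ := (ProperCone.innerDual S).exists_moreau_decomposition s
  refine ⟨(2 : ℝ) • p - s, norm_two_smul_sub_eq_of_inner_sub_eq_zero hperp, fun x hx => ?_⟩
  have hxC : x ∈ ProperCone.innerDual S := fun y hy => hS y hy x hx
  have hxp : 0 ≤ ⟪x, p⟫ := hpC hx
  have hxps : 0 ≤ ⟪x, p - s⟫ := hps hxC
  rw [inner_sub_right] at hxps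
  rw [inner_sub_right, real_inner_smul_right, abs_le]
  constructor <;> linarith

theorem Submodule.exists_mem_norm_eq_abs_inner_le (V : Submodule ℝ E) [CompleteSpace V]
    {S : Set E} (hSV : S ⊆ V) (hS : ∀ x ∈ S, ∀ y ∈ S, 0 ≤ ⟪x, y⟫) {s : E} (hs : s ∈ V) :
    ∃ s' ∈ V, ‖s'‖ = ‖s‖ ∧ ∀ x ∈ S, |⟪x, s⟫| ≤ ⟪x, s'⟫ := by
  obtain ⟨s', hnorm, hdom⟩ := exists_norm_eq_abs_inner_le ((↑) ⁻¹' S : Set V)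
    (fun x hx y hy => hS _ hx _ hy) ⟨s, hs⟩
  exact ⟨s', s'.2, hnorm, fun x hx => hdom ⟨x, hSV hx⟩ hx⟩

theorem inner_sum_smul_nonneg {ι : Type*} (t : Finset ι) {y : ι → E} {w : E}
    (hw : ∀ i, 0 ≤ ⟪y i, w⟫) {α : ι → ℝ} (hα : ∀ i, 0 ≤ α i) :
    0 ≤ ⟪w, ∑ i ∈ t, α i • y i⟫ := by
  rw [inner_sum]
  refine Finset.sum_nonneg fun i _ => ?_
  rw [real_inner_smul_right, real_inner_comm]
  exact mul_nonneg (hα i) (hw i)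

theorem Matrix.gram_mulVec {ι : Type*} [Fintype ι] (y : ι → E) (c : ι → ℝ) :
    gram ℝ y *ᵥ c = fun i => ⟪y i, ∑ j, c j • y j⟫ := by
  ext i
  simp only [mulVec, dotProduct, gram_apply, inner_sum, real_inner_smul_right, mul_comm]

theorem Matrix.dotProduct_gram_inv_mulVec_of_mem_span {ι : Type*} [Fintype ι] [DecidableEq ι]
    {y : ι → E} (hy : LinearIndependent ℝ y) {u : E} (hu : u ∈ Submodule.span ℝ (Set.range y)) :
    (fun i => ⟪y i, u⟫) ⬝ᵥ (gram ℝ y)⁻¹ *ᵥ (fun i => ⟪y i, u⟫) = ‖u‖ ^ 2 := by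
  obtain ⟨c, rfl⟩ := (Submodule.mem_span_range_iff_exists_fun ℝ).1 hu
  have hdet : IsUnit (gram ℝ y).det :=
    (isUnit_iff_isUnit_det _).1 (posDef_gram_of_linearIndependent hy).isUnit
  rw [← gram_mulVec, mulVec_mulVec, nonsing_inv_mul _ hdet, one_mulVec,
    dotProduct_comm, ← real_inner_self_eq_norm_sq, ← star_trivial c, star_dotProduct_gram_mulVec,
    star_trivial]

end

/-- 'If' direction of Lemma 3.4 (condition C1): if the Gram matrix of the linearly
independent vectors `ŷ_i` is doubly nonnegative, then (i) every unit `s ∈ span(ŷ_i)`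
admits a unit vector `s'` in the dual cone of `cone(ŷ_i)` with
`⟨ŷ_i, s'⟩ ≥ |⟨ŷ_i, s⟩|` for all `i`; consequently (ii) every Pareto optimal point of
the feasible region `F = { (⟨ŷ_i, s⟩²)_i : ‖s‖ = 1, s ∈ span(ŷ_i) }` (for coordinatewise
maximization) lies on the single surface `{ v ≥ 0 : (√v)ᵀ G⁻¹ (√v) = 1 }`. -/
theorem stmt_18 {n k : ℕ} (yhat : Fin k → EuclideanSpace ℝ (Fin n))
    (hli : LinearIndependent ℝ yhat)
    (hG : ∀ i j, 0 ≤ (inner ℝ (yhat i) (yhat j) : ℝ))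
    (F : Set (Fin k → ℝ))
    (hF : F = {v : Fin k → ℝ | ∃ s : EuclideanSpace ℝ (Fin n),
      s ∈ Submodule.span ℝ (Set.range yhat) ∧ ‖s‖ = 1 ∧
      ∀ i, v i = (inner ℝ (yhat i) s : ℝ) ^ 2}) :
    (∀ s : EuclideanSpace ℝ (Fin n), s ∈ Submodule.span ℝ (Set.range yhat) →
      ‖s‖ = 1 →
      ∃ s' : EuclideanSpace ℝ (Fin n), ‖s'‖ = 1 ∧
        (∀ x : EuclideanSpace ℝ (Fin n),
          (∃ α : Fin k → ℝ, (∀ i, 0 ≤ α i) ∧ x = ∑ i, α i • yhat i) →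
          0 ≤ (inner ℝ s' x : ℝ)) ∧
        ∀ i, |(inner ℝ (yhat i) s : ℝ)| ≤ (inner ℝ (yhat i) s' : ℝ)) ∧
    (∀ v ∈ F, (¬ ∃ v' ∈ F, (∀ i, v i ≤ v' i) ∧ v' ≠ v) →
      (∀ i, 0 ≤ v i) ∧
      (fun i => Real.sqrt (v i)) ⬝ᵥ
        ((Matrix.of fun i j => (inner ℝ (yhat i) (yhat j) : ℝ))⁻¹).mulVec
          (fun i => Real.sqrt (v i)) = 1) := by
  set V := Submodule.span ℝ (Set.range yhat)
  have dominate : ∀ s ∈ V, ‖s‖ = 1 →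
      ∃ s' ∈ V, ‖s'‖ = 1 ∧ ∀ i, |⟪yhat i, s⟫| ≤ ⟪yhat i, s'⟫ := by
    intro s hs hs1
    obtain ⟨s', hs'V, hnorm, hdom⟩ := V.exists_mem_norm_eq_abs_inner_le Submodule.subset_span
      (by rintro _ ⟨i, rfl⟩ _ ⟨j, rfl⟩; exact hG i j) hs
    exact ⟨s', hs'V, hnorm.trans hs1, fun i => hdom _ ⟨i, rfl⟩⟩
  refine ⟨fun s hs hs1 => ?_, ?_⟩
  · obtain ⟨s', -, hs'1, hdom⟩ := dominate s hs hs1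
    refine ⟨s', hs'1, ?_, hdom⟩
    rintro x ⟨α, hα, rfl⟩
    exact inner_sum_smul_nonneg _ (fun i => (abs_nonneg _).trans (hdom i)) hα
  · subst hF
    rintro v ⟨s, hs, hs1, hv⟩ hpareto
    obtain ⟨s', hs'V, hs'1, hdom⟩ := dominate s hs hs1
    have hle : ∀ i, v i ≤ ⟪yhat i, s'⟫ ^ 2 := fun i => by
      rw [hv i, ← sq_abs]
      exact pow_le_pow_left₀ (abs_nonneg _) (hdom i) 2
    have hv' : v = fun i => ⟪yhat i, s'⟫ ^ 2 := by
      by_contra hne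
      exact hpareto ⟨_, ⟨s', hs'V, hs'1, fun i => rfl⟩, hle, Ne.symm hne⟩
    have hsqrt : (fun i => √(v i)) = fun i => ⟪yhat i, s'⟫ := by
      funext i
      rw [hv', Real.sqrt_sq ((abs_nonneg _).trans (hdom i))]
    refine ⟨fun i => hv i ▸ sq_nonneg _, ?_⟩
    rw [hsqrt]
    exact (dotProduct_gram_inv_mulVec_of_mem_span hli hs'V).trans (by rw [hs'1, one_pow])
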